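/- Let Ω¹ ⊂ ℝ³ be a bounded open set, let h_n → 0⁺, and let F_n, A_n, X, A ∈ L²(Ω¹; M_{3×3}(ℝ)). Suppose there exist measurable fields R_n : Ω¹ → SO(3) and a constant K such that ∫_{Ω¹} ‖R_n(x) F_n(x) − A_n(x)‖_F² dx ≤ K h_n⁴ for all n, and F_n → X, A_n → A strongly in L². Then Aᵀ A = Xᵀ X almost everywhere in Ω¹. -/

import Mathlib

open MeasureTheory Matrix Filter

attribute [local instance] Matrix.frobeniusNormedAddCommGroup

/-- The set of special orthogonal `3×3` real matrices. -/
def SO3 : Set (Matrix (Fin 3) (Fin 3) ℝ) := {R | Rᵀ * R = 1 ∧ R.det = 1}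

/-!
Since `Rᵀ R = 1`, the metric `(R F)ᵀ (R F)` equals `Fᵀ F`. The bound `K h_n⁴ → 0` makes
`R_n F_n - A_n → 0` in `L²`, so the three errors `F_n - X`, `A_n - A`, `R_n F_n - A_n` have
`L²`-norms tending to zero; along a subsequence they tend to zero a.e., hence pointwise a.e.
`F_n → X` and `R_n F_n → A`, and passing to the limit in `(R_n F_n)ᵀ (R_n F_n) = F_nᵀ F_n`
gives `Aᵀ A = Xᵀ X`.
-/

open Topology

theorem tendsto_of_norm_sub_sq_le {ι E : Type*} [SeminormedAddCommGroup E] {l : Filter ι}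
    {u : ι → E} {a : E} {g : ι → ℝ} (hg : Tendsto g l (𝓝 0)) (hug : ∀ i, ‖u i - a‖ ^ 2 ≤ g i) :
    Tendsto u l (𝓝 a) :=
  tendsto_iff_norm_sub_tendsto_zero.2 <|
    squeeze_zero (fun _ => norm_nonneg _) (fun i => Real.le_sqrt_of_sq_le (hug i))
      (by simpa using hg.sqrt)

namespace Matrix

variable {m n : Type*} [Fintype m] [Fintype n]

theorem frobenius_norm_sq_eq_trace (A : Matrix m n ℝ) : ‖A‖ ^ 2 = (Aᵀ * A).trace := by
  rw [frobenius_norm_def, ← Real.sqrt_eq_rpow, Real.sq_sqrt (by positivity), Finset.sum_comm]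
  simp [trace, mul_apply, sq]

theorem frobenius_norm_mul_of_transpose_mul_self_eq_one [DecidableEq m] {Q : Matrix m m ℝ}
    (hQ : Qᵀ * Q = 1) (M : Matrix m n ℝ) : ‖Q * M‖ = ‖M‖ := by
  rw [← sq_eq_sq₀ (norm_nonneg _) (norm_nonneg _), frobenius_norm_sq_eq_trace,
    frobenius_norm_sq_eq_trace, transpose_mul, Matrix.mul_assoc, ← Matrix.mul_assoc Qᵀ, hQ,
    Matrix.one_mul]

theorem transpose_mul_self_eq_of_tendsto [DecidableEq n] {Q F : ℕ → Matrix n n ℝ}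
    {X A : Matrix n n ℝ} (hQ : ∀ k, (Q k)ᵀ * Q k = 1) (hF : Tendsto F atTop (𝓝 X))
    (hQF : Tendsto (fun k => Q k * F k) atTop (𝓝 A)) : Aᵀ * A = Xᵀ * X := by
  have hcont : Continuous fun M : Matrix n n ℝ => Mᵀ * M :=
    continuous_id.matrix_transpose.matrix_mul continuous_id
  refine tendsto_nhds_unique ((hcont.tendsto A).comp hQF) (((hcont.tendsto X).comp hF).congr ?_)
  intro k
  simp only [Function.comp, transpose_mul, Matrix.mul_assoc, ← Matrix.mul_assoc (Q k)ᵀ, hQ k,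
    Matrix.one_mul]

theorem transpose_mul_self_eq_of_tendsto_norm_sub_sq [DecidableEq n] {Q F B : ℕ → Matrix n n ℝ}
    {X A : Matrix n n ℝ} (hQ : ∀ k, (Q k)ᵀ * Q k = 1)
    (h : Tendsto (fun k => ‖F k - X‖ ^ 2 + ‖B k - A‖ ^ 2 + ‖Q k * F k - B k‖ ^ 2) atTop (𝓝 0)) :
    Aᵀ * A = Xᵀ * X := by
  have hF : Tendsto F atTop (𝓝 X) := tendsto_of_norm_sub_sq_le h fun _ =>
    le_add_of_le_of_nonneg (le_add_of_nonneg_right (sq_nonneg _)) (sq_nonneg _)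
  have hB : Tendsto B atTop (𝓝 A) := tendsto_of_norm_sub_sq_le h fun _ =>
    le_add_of_le_of_nonneg (le_add_of_nonneg_left (sq_nonneg _)) (sq_nonneg _)
  have hQFB : Tendsto (fun k => Q k * F k - B k) atTop (𝓝 0) := tendsto_of_norm_sub_sq_le h
    fun _ => by rw [sub_zero]; exact le_add_of_nonneg_left (add_nonneg (sq_nonneg _) (sq_nonneg _))
  exact transpose_mul_self_eq_of_tendsto hQ hF (by simpa using hQFB.add hB)

end Matrix

namespace MeasureTheory

variable {α : Type*} [MeasurableSpace α] {μ : Measure α}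

theorem exists_seq_tendsto_ae_zero_of_tendsto_integral {g : ℕ → α → ℝ}
    (hg_nonneg : ∀ n, 0 ≤ᵐ[μ] g n) (hg_int : ∀ n, Integrable (g n) μ)
    (h : Tendsto (fun n => ∫ x, g n x ∂μ) atTop (𝓝 0)) :
    ∃ ns : ℕ → ℕ, StrictMono ns ∧ ∀ᵐ x ∂μ, Tendsto (fun i => g (ns i) x) atTop (𝓝 0) := by
  have heLp n : eLpNorm (g n - 0) 1 μ = ENNReal.ofReal (∫ x, g n x ∂μ) := by
    rw [sub_zero, eLpNorm_one_eq_lintegral_enorm,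
      ← ofReal_integral_norm_eq_lintegral_enorm (hg_int n),
      integral_congr_ae ((hg_nonneg n).mono fun _ hx => Real.norm_of_nonneg hx)]
  have hL1 : Tendsto (fun n => eLpNorm (g n - 0) 1 μ) atTop (𝓝 0) := by
    simpa only [heLp, ENNReal.ofReal_zero] using ENNReal.tendsto_ofReal h
  exact (tendstoInMeasure_of_tendsto_eLpNorm one_ne_zero (fun n => (hg_int n).1)
    aestronglyMeasurable_const hL1).exists_seq_tendsto_ae

theorem aestronglyMeasurable_of_measurable_entries {m n : Type*} [Fintype m] [Fintype n]
    {f : α → Matrix m n ℝ} (hf : ∀ i j, Measurable fun x => f x i j) :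
    AEStronglyMeasurable f μ :=
  (measurable_pi_lambda _ fun i => measurable_pi_lambda _ fun j => hf i j).aestronglyMeasurable

theorem MemLp.orthogonal_mul {m n : Type*} [Fintype m] [DecidableEq m] [Fintype n]
    {p : ENNReal} {Q : α → Matrix m m ℝ} {f : α → Matrix m n ℝ} (hQ : AEStronglyMeasurable Q μ)
    (hQ_orth : ∀ᵐ x ∂μ, (Q x)ᵀ * Q x = 1) (hf : MemLp f p μ) :
    MemLp (fun x => Q x * f x) p μ :=
  hf.of_le ((continuous_fst.matrix_mul continuous_snd).comp_aestronglyMeasurable₂ hQ hf.1)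
    (hQ_orth.mono fun _ hx => (frobenius_norm_mul_of_transpose_mul_self_eq_one hx _).le)

end MeasureTheory

theorem stmt5_general (Ω1 : Set (Fin 3 → ℝ)) (hΩo : IsOpen Ω1)
    (h : ℕ → ℝ) (hh0 : Tendsto h atTop (nhds 0))
    (F A : ℕ → (Fin 3 → ℝ) → Matrix (Fin 3) (Fin 3) ℝ)
    (X Alim : (Fin 3 → ℝ) → Matrix (Fin 3) (Fin 3) ℝ)
    (hFL2 : ∀ n, MemLp (F n) 2 (volume.restrict Ω1))
    (hAL2 : ∀ n, MemLp (A n) 2 (volume.restrict Ω1))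
    (hXL2 : MemLp X 2 (volume.restrict Ω1))
    (hAlimL2 : MemLp Alim 2 (volume.restrict Ω1))
    (R : ℕ → (Fin 3 → ℝ) → Matrix (Fin 3) (Fin 3) ℝ)
    (hRmeas : ∀ n i j, Measurable fun x => R n x i j)
    (hRSO : ∀ n, ∀ x ∈ Ω1, R n x ∈ SO3)
    (K : ℝ)
    (hbd : ∀ n, ∫ x in Ω1, ‖R n x * F n x - A n x‖ ^ 2 ≤ K * h n ^ 4)
    (hF : Tendsto (fun n => ∫ x in Ω1, ‖F n x - X x‖ ^ 2) atTop (nhds 0))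
    (hA : Tendsto (fun n => ∫ x in Ω1, ‖A n x - Alim x‖ ^ 2) atTop (nhds 0)) :
    ∀ᵐ x ∂volume.restrict Ω1, (Alim x)ᵀ * Alim x = (X x)ᵀ * X x := by
  have hΩ : ∀ᵐ x ∂volume.restrict Ω1, x ∈ Ω1 := ae_restrict_mem hΩo.measurableSet
  have hRF n : MemLp (fun x => R n x * F n x) 2 (volume.restrict Ω1) :=
    (hFL2 n).orthogonal_mul (aestronglyMeasurable_of_measurable_entries (hRmeas n))
      (hΩ.mono fun x hx => (hRSO n x hx).1)
  have hRFA : Tendsto (fun n => ∫ x in Ω1, ‖R n x * F n x - A n x‖ ^ 2) atTop (𝓝 0) :=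
    squeeze_zero (fun n => integral_nonneg fun x => by positivity) hbd
      (by simpa using tendsto_const_nhds.mul (hh0.pow 4))
  have hFX_int n := ((hFL2 n).sub hXL2).integrable_norm_pow two_ne_zero
  have hAA_int n := ((hAL2 n).sub hAlimL2).integrable_norm_pow two_ne_zero
  have hRFA_int n := ((hRF n).sub (hAL2 n)).integrable_norm_pow two_ne_zero
  let g n x := ‖F n x - X x‖ ^ 2 + ‖A n x - Alim x‖ ^ 2 + ‖R n x * F n x - A n x‖ ^ 2
  have hg : Tendsto (fun n => ∫ x in Ω1, g n x) atTop (𝓝 0) := by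
    refine (by simpa using (hF.add hA).add hRFA : Tendsto _ _ _).congr fun n => ?_
    exact (integral_add ((hFX_int n).add (hAA_int n)) (hRFA_int n)).trans
      (congrArg (· + _) (integral_add (hFX_int n) (hAA_int n))) |>.symm
  obtain ⟨ns, -, hns⟩ := exists_seq_tendsto_ae_zero_of_tendsto_integral (g := g)
    (fun n => ae_of_all _ fun x => by simp only [Pi.zero_apply, g]; positivity)
    (fun n => ((hFX_int n).add (hAA_int n)).add (hRFA_int n)) hg
  filter_upwards [hns, hΩ] with x hx hxΩ
  exact transpose_mul_self_eq_of_tendsto_norm_sub_sq (fun k => (hRSO (ns k) x hxΩ).1) hx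

/-- **Core of Proposition 18 of the paper.** If `‖R_n F_n − A_n‖_{L²}² ≤ K h_n⁴` for
rotation-valued fields `R_n`, and `F_n → X`, `A_n → A` strongly in `L²`, then
`AᵀA = XᵀX` a.e. in `Ω¹`. -/
theorem stmt5 (Ω1 : Set (Fin 3 → ℝ)) (hΩo : IsOpen Ω1) (hΩb : Bornology.IsBounded Ω1)
    (h : ℕ → ℝ) (hh : ∀ n, 0 < h n) (hh0 : Tendsto h atTop (nhds 0))
    (F A : ℕ → (Fin 3 → ℝ) → Matrix (Fin 3) (Fin 3) ℝ)
    (X Alim : (Fin 3 → ℝ) → Matrix (Fin 3) (Fin 3) ℝ)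
    (hFL2 : ∀ n, MemLp (F n) 2 (volume.restrict Ω1))
    (hAL2 : ∀ n, MemLp (A n) 2 (volume.restrict Ω1))
    (hXL2 : MemLp X 2 (volume.restrict Ω1))
    (hAlimL2 : MemLp Alim 2 (volume.restrict Ω1))
    (R : ℕ → (Fin 3 → ℝ) → Matrix (Fin 3) (Fin 3) ℝ)
    (hRmeas : ∀ n i j, Measurable fun x => R n x i j)
    (hRSO : ∀ n, ∀ x ∈ Ω1, R n x ∈ SO3)
    (K : ℝ)
    (hbd : ∀ n, ∫ x in Ω1, ‖R n x * F n x - A n x‖ ^ 2 ≤ K * h n ^ 4)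
    (hF : Tendsto (fun n => ∫ x in Ω1, ‖F n x - X x‖ ^ 2) atTop (nhds 0))
    (hA : Tendsto (fun n => ∫ x in Ω1, ‖A n x - Alim x‖ ^ 2) atTop (nhds 0)) :
    ∀ᵐ x ∂volume.restrict Ω1, (Alim x)ᵀ * Alim x = (X x)ᵀ * X x :=
  stmt5_general Ω1 hΩo h hh0 F A X Alim hFL2 hAL2 hXL2 hAlimL2 R hRmeas hRSO K hbd hF hA
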